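/- Let 0<λ<1, d≥2, let A:ℝ→ℝ be Lipschitz and 1-periodic, let b be the λ-calibrated subaction for A, and define the rate function R(z)=b(T(z))−λb(z)−A(z)≥0 and p(x,w)=b(x)−S(x,w)≥0. Then: (a) for every x∈[0,1] and w∈Σ, R(τ_{w₀}(x)) = p(x,w) − λ·p(τ_{w₀}(x), σ(w)), i.e. p − λ·(p∘𝕋^{-1}) = R∘(first coordinate of 𝕋^{-1}) ≥ 0; (b) hence the set Γ={(x,w) : p(x,w)=0} is invariant under 𝕋^{-1}: p(x,w)=0 implies p(τ_{w₀}(x),σ(w))=0; (c) iterating, if a=(i₀,i₁,…) is optimal for x (b(x)=S(x,a)), then σⁿ(a) is optimal for (τ_{i_{n−1}}∘⋯∘τ_{i₁}∘τ_{i₀})(x) for every n≥1. -/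

import Mathlib

open Set

noncomputable section

/-- Inverse branch `τ_i(x) = (x+i)/d` of `T(x) = dx (mod 1)`. -/
def tau (d i : ℕ) (x : ℝ) : ℝ := (x + i) / d

/-- Iterated inverse branches: `tpath d a x k = (τ_{a_k} ∘ ⋯ ∘ τ_{a_0})(x)`. -/
def tpath (d : ℕ) (a : ℕ → ℕ) (x : ℝ) : ℕ → ℝ
  | 0 => tau d (a 0) x
  | k + 1 => tau d (a (k + 1)) (tpath d a x k)

/-- `S(x,a) = Σ_{k≥0} λ^k A(τ_{k,a} x)`. -/
def Sfun (lam : ℝ) (d : ℕ) (A : ℝ → ℝ) (x : ℝ) (a : ℕ → ℕ) : ℝ :=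
  ∑' k : ℕ, lam ^ k * A (tpath d a x k)

/-- The left shift `σ` on sequences. -/
def shift (a : ℕ → ℕ) : ℕ → ℕ := fun n => a (n + 1)

/-- Strict lexicographic order on sequences. -/
def lexLt (a b : ℕ → ℕ) : Prop := ∃ n, (∀ i < n, a i = b i) ∧ a n < b n

/-- `T(x) = dx (mod 1)`. -/
def Tmap (d : ℕ) (x : ℝ) : ℝ := Int.fract (d * x)

/-- A λ-calibrated subaction for `A`: continuous on `[0,1]`, `b 0 = b 1`, and
`b(x) = max_{i<d} (λ b(τ_i x) + A(τ_i x))` for all `x ∈ [0,1]`. -/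
def IsCalibrated (lam : ℝ) (d : ℕ) (A b : ℝ → ℝ) : Prop :=
  ContinuousOn b (Icc 0 1) ∧ b 0 = b 1 ∧
    ∀ x ∈ Icc (0:ℝ) 1,
      IsGreatest {y : ℝ | ∃ i < d, y = lam * b (tau d i x) + A (tau d i x)} (b x)

/-- The twist condition: for `a < b` lexicographically and `x ∈ (0,1)`,
`∂S/∂x(x,a) − ∂S/∂x(x,b) > 0`. -/
def Twist (lam : ℝ) (d : ℕ) (A : ℝ → ℝ) : Prop :=
  ∀ a b : ℕ → ℕ, (∀ k, a k < d) → (∀ k, b k < d) → lexLt a b →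
    ∀ x ∈ Ioo (0:ℝ) 1,
      0 < deriv (fun y => Sfun lam d A y a) x - deriv (fun y => Sfun lam d A y b) x

/-- `Z(a) = Σ_k (λ/2)^k a_k`. -/
def Zfun (lam : ℝ) (a : ℕ → ℕ) : ℝ := ∑' k : ℕ, (lam / 2) ^ k * a k

/-- `ψ_k(a) = Σ_{j=0}^{k} a_j 2^{j−k−1}`. -/
def psi (a : ℕ → ℕ) (k : ℕ) : ℝ :=
  ∑ j ∈ Finset.range (k + 1), (a j : ℝ) * (2 : ℝ) ^ ((j : ℤ) - k - 1)

/-- Concatenation `i * c`. -/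
def cons (i : ℕ) (c : ℕ → ℕ) : ℕ → ℕ
  | 0 => i
  | n + 1 => c n

/-- The periodic sequence `(10)^∞ = (1,0,1,0,…)`. -/
def seq10 : ℕ → ℕ := fun n => if n % 2 = 0 then 1 else 0

/-- The periodic sequence `(01)^∞ = (0,1,0,1,…)`. -/
def seq01 : ℕ → ℕ := fun n => n % 2

/-- The periodic sequence `(110)^∞`. -/
def seq110 : ℕ → ℕ := fun n => if n % 3 = 2 then 0 else 1

/-- The periodic sequence `(101)^∞`. -/
def seq101 : ℕ → ℕ := fun n => if n % 3 = 1 then 0 else 1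

/-- The periodic sequence `(011)^∞`. -/
def seq011 : ℕ → ℕ := fun n => if n % 3 = 0 then 0 else 1

/-!
Unfolding one term of the series gives `S(x,w) = A(τ_{w₀}x) + λ S(τ_{w₀}x, σw)`, and
`T ∘ τ_i` is the identity on `[0,1)` (and `b(T 1) = b 0 = b 1`), so identity (a) is plain algebra.
`R ≥ 0` because every `z ∈ [0,1]` is `τ_i y` for some `y ∈ [0,1]` with `b(T z) = b y`, and the
calibration inequality at `y` is exactly `R z ≥ 0`. Iterating the calibration inequality along
`w` bounds the partial sums of `S(x,w)` by `b x` up to an error `λⁿ⁺¹ b(…) → 0`, so `p ≥ 0`.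
Finally, if `p(x,w) = 0` then (a) reads `0 ≤ R = -λ p(τ_{w₀}x, σw) ≤ 0`, and (c) follows by
induction along the orbit.
-/

section Branches

variable {d : ℕ}

lemma tau_mem_Icc (hd : 0 < d) {i : ℕ} (hi : i < d) {x : ℝ} (hx : x ∈ Icc (0:ℝ) 1) :
    tau d i x ∈ Icc (0:ℝ) 1 := by
  have hd' : (0:ℝ) < d := by exact_mod_cast hd
  have hi' : (i:ℝ) + 1 ≤ d := by exact_mod_cast hi
  constructor
  · exact div_nonneg (by linarith [hx.1]) hd'.le
  · rw [tau, div_le_one hd']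
    linarith [hx.2]

lemma tpath_mem_Icc (hd : 0 < d) {w : ℕ → ℕ} (hw : ∀ k, w k < d) {x : ℝ}
    (hx : x ∈ Icc (0:ℝ) 1) (n : ℕ) : tpath d w x n ∈ Icc (0:ℝ) 1 := by
  induction n with
  | zero => exact tau_mem_Icc hd (hw 0) hx
  | succ k ih => exact tau_mem_Icc hd (hw (k + 1)) ih

lemma tpath_succ (w : ℕ → ℕ) (x : ℝ) (k : ℕ) :
    tpath d w x (k + 1) = tpath d (shift w) (tau d (w 0) x) k := by
  induction k with
  | zero => rfl
  | succ m ih => exact congrArg (tau d (w (m + 2))) ih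

lemma Tmap_tau (hd : d ≠ 0) (i : ℕ) (x : ℝ) : Tmap d (tau d i x) = Int.fract x := by
  rw [Tmap, tau, mul_div_cancel₀ _ (Nat.cast_ne_zero.mpr hd), Int.fract_add_natCast]

lemma exists_tau_eq (hd : 0 < d) {z : ℝ} (hz : z ∈ Icc (0:ℝ) 1) :
    ∃ i < d, ∃ y ∈ Icc (0:ℝ) 1, tau d i y = z := by
  have hd' : (0:ℝ) < d := by exact_mod_cast hd
  have hdz : 0 ≤ (d:ℝ) * z := mul_nonneg hd'.le hz.1
  -- Capping at `d - 1` matters only for `z = 1`, where `⌊d z⌋₊ = d`.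
  set i := min ⌊(d:ℝ) * z⌋₊ (d - 1)
  have hi_le : (i:ℝ) ≤ d * z := (Nat.cast_le.mpr (min_le_left _ _)).trans (Nat.floor_le hdz)
  have hi_succ : (d:ℝ) * z ≤ i + 1 := by
    rcases min_choice ⌊(d:ℝ) * z⌋₊ (d - 1) with h | h
    · rw [show i = _ from h]
      exact (Nat.lt_floor_add_one _).le
    · rw [show i = _ from h, Nat.cast_sub hd, Nat.cast_one, sub_add_cancel]
      nlinarith [hz.2]
  refine ⟨i, by omega, d * z - i, ⟨by linarith, by linarith⟩, ?_⟩
  rw [tau]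
  field_simp
  ring

end Branches

section Series

variable {lam : ℝ} {d : ℕ} {A : ℝ → ℝ}

lemma summable_Sfun (hlam : |lam| < 1) (hd : 0 < d) (hA : ContinuousOn A (Icc 0 1))
    {w : ℕ → ℕ} (hw : ∀ k, w k < d) {x : ℝ} (hx : x ∈ Icc (0:ℝ) 1) :
    Summable (fun k : ℕ => lam ^ k * A (tpath d w x k)) := by
  obtain ⟨C, hC⟩ := isCompact_Icc.exists_bound_of_continuousOn hA
  refine Summable.of_norm_bounded
    ((summable_geometric_of_abs_lt_one hlam).abs.mul_left C) fun k => ?_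
  rw [norm_mul, norm_pow, Real.norm_eq_abs, abs_pow, mul_comm]
  exact mul_le_mul_of_nonneg_right (hC _ (tpath_mem_Icc hd hw hx k)) (by positivity)

lemma Sfun_eq_add (hlam : |lam| < 1) (hd : 0 < d) (hA : ContinuousOn A (Icc 0 1))
    {w : ℕ → ℕ} (hw : ∀ k, w k < d) {x : ℝ} (hx : x ∈ Icc (0:ℝ) 1) :
    Sfun lam d A x w = A (tau d (w 0) x) + lam * Sfun lam d A (tau d (w 0) x) (shift w) := by
  rw [Sfun, (summable_Sfun hlam hd hA hw hx).tsum_eq_zero_add, Sfun, ← tsum_mul_left]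
  congr 1
  · simp [tpath]
  · congr 1 with k
    rw [tpath_succ, pow_succ']
    ring

end Series

namespace IsCalibrated

variable {lam : ℝ} {d : ℕ} {A b : ℝ → ℝ}

lemma le (hb : IsCalibrated lam d A b) {x : ℝ} (hx : x ∈ Icc (0:ℝ) 1) {i : ℕ} (hi : i < d) :
    lam * b (tau d i x) + A (tau d i x) ≤ b x :=
  (hb.2.2 x hx).2 ⟨i, hi, rfl⟩

lemma comp_Tmap_tau (hb : IsCalibrated lam d A b) (hd : d ≠ 0) (i : ℕ) {x : ℝ}
    (hx : x ∈ Icc (0:ℝ) 1) : b (Tmap d (tau d i x)) = b x := by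
  rw [Tmap_tau hd]
  rcases hx.2.eq_or_lt with rfl | h1
  · rw [Int.fract_one, hb.2.1]
  · rw [Int.fract_eq_self.mpr ⟨hx.1, h1⟩]

lemma rate_nonneg (hb : IsCalibrated lam d A b) (hd : 0 < d) {z : ℝ} (hz : z ∈ Icc (0:ℝ) 1) :
    0 ≤ b (Tmap d z) - lam * b z - A z := by
  obtain ⟨i, hi, y, hy, rfl⟩ := exists_tau_eq hd hz
  rw [hb.comp_Tmap_tau hd.ne' i hy]
  linarith [hb.le hy hi]

lemma sum_range_add_le (hb : IsCalibrated lam d A b) (hlam : 0 ≤ lam) (hd : 0 < d)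
    {w : ℕ → ℕ} (hw : ∀ k, w k < d) {x : ℝ} (hx : x ∈ Icc (0:ℝ) 1) (n : ℕ) :
    ∑ k ∈ Finset.range (n + 1), lam ^ k * A (tpath d w x k)
      + lam ^ (n + 1) * b (tpath d w x n) ≤ b x := by
  induction n with
  | zero => simpa [tpath, add_comm] using hb.le hx (hw 0)
  | succ m ih =>
    have step := mul_le_mul_of_nonneg_left
      (hb.le (tpath_mem_Icc hd hw hx m) (hw (m + 1))) (pow_nonneg hlam (m + 1))
    rw [Finset.sum_range_succ, pow_succ _ (m + 1)]
    simp only [tpath] at step ⊢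
    linarith

lemma Sfun_le (hb : IsCalibrated lam d A b) (hlam0 : 0 ≤ lam) (hlam1 : lam < 1) (hd : 0 < d)
    (hA : ContinuousOn A (Icc 0 1)) {w : ℕ → ℕ} (hw : ∀ k, w k < d) {x : ℝ}
    (hx : x ∈ Icc (0:ℝ) 1) : Sfun lam d A x w ≤ b x := by
  have hlam : |lam| < 1 := by rwa [abs_of_nonneg hlam0]
  obtain ⟨M, hM⟩ := isCompact_Icc.exists_bound_of_continuousOn hb.1
  have hpow : Filter.Tendsto (fun n : ℕ => lam ^ (n + 1)) Filter.atTop (nhds 0) :=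
    (tendsto_pow_atTop_nhds_zero_of_lt_one hlam0 hlam1).comp (Filter.tendsto_add_atTop_nat 1)
  have hpartial : Filter.Tendsto (fun n => ∑ k ∈ Finset.range (n + 1), lam ^ k * A (tpath d w x k))
      Filter.atTop (nhds (Sfun lam d A x w)) :=
    (summable_Sfun hlam hd hA hw hx).hasSum.tendsto_sum_nat.comp (Filter.tendsto_add_atTop_nat 1)
  have herror : Filter.Tendsto (fun n : ℕ => lam ^ (n + 1) * b (tpath d w x n))
      Filter.atTop (nhds 0) := by
    refine squeeze_zero_norm (fun n => ?_) (by simpa using hpow.mul_const M)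
    rw [norm_mul, Real.norm_of_nonneg (by positivity)]
    exact mul_le_mul_of_nonneg_left (hM _ (tpath_mem_Icc hd hw hx n)) (by positivity)
  simpa using le_of_tendsto (hpartial.add herror)
    (Filter.Eventually.of_forall (hb.sum_range_add_le hlam0 hd hw hx))

lemma rate_tau_eq (hb : IsCalibrated lam d A b) (hlam : |lam| < 1) (hd : 0 < d)
    (hA : ContinuousOn A (Icc 0 1)) {w : ℕ → ℕ} (hw : ∀ k, w k < d) {x : ℝ}
    (hx : x ∈ Icc (0:ℝ) 1) :
    b (Tmap d (tau d (w 0) x)) - lam * b (tau d (w 0) x) - A (tau d (w 0) x)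
      = (b x - Sfun lam d A x w)
        - lam * (b (tau d (w 0) x) - Sfun lam d A (tau d (w 0) x) (shift w)) := by
  rw [Sfun_eq_add hlam hd hA hw hx, hb.comp_Tmap_tau hd.ne' (w 0) hx]
  ring

lemma Sfun_shift_eq (hb : IsCalibrated lam d A b) (hlam0 : 0 < lam) (hlam1 : lam < 1)
    (hd : 0 < d) (hA : ContinuousOn A (Icc 0 1)) {w : ℕ → ℕ} (hw : ∀ k, w k < d) {x : ℝ}
    (hx : x ∈ Icc (0:ℝ) 1) (hopt : b x = Sfun lam d A x w) :
    b (tau d (w 0) x) = Sfun lam d A (tau d (w 0) x) (shift w) := by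
  have hy := tau_mem_Icc hd (hw 0) hx
  have hR := hb.rate_nonneg hd hy
  rw [hb.rate_tau_eq (by rwa [abs_of_pos hlam0]) hd hA hw hx, hopt, sub_self, zero_sub,
    neg_nonneg] at hR
  have hle := hb.Sfun_le hlam0.le hlam1 hd hA (w := shift w) (fun k => hw (k + 1)) hy
  have := nonpos_of_mul_nonpos_right hR hlam0
  linarith

lemma Sfun_tpath_eq (hb : IsCalibrated lam d A b) (hlam0 : 0 < lam) (hlam1 : lam < 1)
    (hd : 0 < d) (hA : ContinuousOn A (Icc 0 1)) {a : ℕ → ℕ} (ha : ∀ k, a k < d) {x : ℝ}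
    (hx : x ∈ Icc (0:ℝ) 1) (hopt : b x = Sfun lam d A x a) (n : ℕ) :
    b (tpath d a x n) = Sfun lam d A (tpath d a x n) (fun m => a (m + n + 1)) := by
  induction n generalizing a x with
  | zero => exact hb.Sfun_shift_eq hlam0 hlam1 hd hA ha hx hopt
  | succ n ih =>
    rw [tpath_succ]
    exact ih (fun k => ha (k + 1)) (tau_mem_Icc hd (ha 0) hx)
      (hb.Sfun_shift_eq hlam0 hlam1 hd hA ha hx hopt)

end IsCalibrated

theorem stmt19_general (lam : ℝ) (hlam0 : 0 < lam) (hlam1 : lam < 1) (d : ℕ) (hd : 2 ≤ d)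
    (A : ℝ → ℝ) (K : NNReal) (hLip : LipschitzWith K A)
    (b : ℝ → ℝ) (hb : IsCalibrated lam d A b)
    (R : ℝ → ℝ) (hR : ∀ z, R z = b (Tmap d z) - lam * b z - A z)
    (p : ℝ → (ℕ → ℕ) → ℝ) (hp : ∀ x w, p x w = b x - Sfun lam d A x w) :
    (∀ z ∈ Icc (0:ℝ) 1, 0 ≤ R z) ∧
    (∀ x ∈ Icc (0:ℝ) 1, ∀ w : ℕ → ℕ, (∀ k, w k < d) → 0 ≤ p x w) ∧
    (∀ x ∈ Icc (0:ℝ) 1, ∀ w : ℕ → ℕ, (∀ k, w k < d) →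
      R (tau d (w 0) x) = p x w - lam * p (tau d (w 0) x) (shift w)) ∧
    (∀ x ∈ Icc (0:ℝ) 1, ∀ w : ℕ → ℕ, (∀ k, w k < d) →
      p x w = 0 → p (tau d (w 0) x) (shift w) = 0) ∧
    (∀ x ∈ Icc (0:ℝ) 1, ∀ a : ℕ → ℕ, (∀ k, a k < d) → b x = Sfun lam d A x a →
      ∀ n : ℕ, b (tpath d a x n) = Sfun lam d A (tpath d a x n) (fun m => a (m + n + 1))) := by
  have hd0 : 0 < d := by omega
  have hlam : |lam| < 1 := by rwa [abs_of_pos hlam0]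
  have hA : ContinuousOn A (Icc 0 1) := hLip.continuous.continuousOn
  refine ⟨fun z hz => hR z ▸ hb.rate_nonneg hd0 hz,
    fun x hx w hw => (hp x w).symm ▸ sub_nonneg.mpr (hb.Sfun_le hlam0.le hlam1 hd0 hA hw hx),
    fun x hx w hw => by rw [hR, hp, hp, hb.rate_tau_eq hlam hd0 hA hw hx], ?_,
    fun x hx a ha hopt n => hb.Sfun_tpath_eq hlam0 hlam1 hd0 hA ha hx hopt n⟩
  intro x hx w hw hpx
  rw [hp, sub_eq_zero] at hpx ⊢
  exact hb.Sfun_shift_eq hlam0 hlam1 hd0 hA hw hx hpx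

/-- the fundamental relation. With `R(z) = b(T z) − λ b(z) − A(z) ≥ 0` and
`p(x,w) = b(x) − S(x,w) ≥ 0`: (a) `R(τ_{w₀}x) = p(x,w) − λ p(τ_{w₀}x, σw)`;
(b) `Γ = {p = 0}` is `𝕋⁻¹`-invariant; (c) if `a` is optimal for `x` then `σⁿ(a)` is
optimal for `τ_{a_{n−1}} ∘ ⋯ ∘ τ_{a₀}(x)` for every `n ≥ 1`. -/
theorem stmt19 (lam : ℝ) (hlam0 : 0 < lam) (hlam1 : lam < 1) (d : ℕ) (hd : 2 ≤ d)
    (A : ℝ → ℝ) (K : NNReal) (hLip : LipschitzWith K A) (hper : Function.Periodic A 1)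
    (b : ℝ → ℝ) (hb : IsCalibrated lam d A b)
    (R : ℝ → ℝ) (hR : ∀ z, R z = b (Tmap d z) - lam * b z - A z)
    (p : ℝ → (ℕ → ℕ) → ℝ) (hp : ∀ x w, p x w = b x - Sfun lam d A x w) :
    (∀ z ∈ Icc (0:ℝ) 1, 0 ≤ R z) ∧
    (∀ x ∈ Icc (0:ℝ) 1, ∀ w : ℕ → ℕ, (∀ k, w k < d) → 0 ≤ p x w) ∧
    (∀ x ∈ Icc (0:ℝ) 1, ∀ w : ℕ → ℕ, (∀ k, w k < d) →
      R (tau d (w 0) x) = p x w - lam * p (tau d (w 0) x) (shift w)) ∧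
    (∀ x ∈ Icc (0:ℝ) 1, ∀ w : ℕ → ℕ, (∀ k, w k < d) →
      p x w = 0 → p (tau d (w 0) x) (shift w) = 0) ∧
    (∀ x ∈ Icc (0:ℝ) 1, ∀ a : ℕ → ℕ, (∀ k, a k < d) → b x = Sfun lam d A x a →
      ∀ n : ℕ, b (tpath d a x n) = Sfun lam d A (tpath d a x n) (fun m => a (m + n + 1))) :=
  stmt19_general lam hlam0 hlam1 d hd A K hLip b hb R hR p hp

end
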